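/- Let ζ be a complex number with Re ζ > 0 and let f : ℝ → ℂ be continuous with compact support. Define u_ζ^∘(x) = (2ζ)^{−1} ∫_{(0,∞)} (e^{−ζ|x−t|} − e^{−ζ(x+t)}) f(t) dt for x > 0, u_ζ^∘(x) = (2ζ)^{−1} ∫_{(−∞,0)} (e^{−ζ|x−t|} − e^{ζ(x+t)}) f(t) dt for x < 0, and u_ζ^∘(0) = 0. Then u_ζ^∘ is continuous on ℝ, vanishes at 0, tends to 0 at ±∞, and satisfies −(u_ζ^∘)''(x) + ζ² u_ζ^∘(x) = f(x) at every x > 0 and every x < 0. -/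

import Mathlib

open Set Filter

/-- The Dirichlet resolvent formula on the two half-lines (Dirichlet condition at 0). -/
noncomputable def uCirc (ζ : ℂ) (f : ℝ → ℂ) (x : ℝ) : ℂ :=
  if 0 < x then
    (2 * ζ)⁻¹ * ∫ t in Set.Ioi (0 : ℝ),
      (Complex.exp (-ζ * |x - t|) - Complex.exp (-ζ * (x + t))) * f t
  else if x < 0 then
    (2 * ζ)⁻¹ * ∫ t in Set.Iio (0 : ℝ),
      (Complex.exp (-ζ * |x - t|) - Complex.exp (ζ * (x + t))) * f t
  else 0

namespace UCircAux

open MeasureTheory intervalIntegral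

noncomputable def F (ζ : ℂ) (f : ℝ → ℂ) (x : ℝ) : ℂ :=
  ∫ t in (0:ℝ)..x, Complex.exp (ζ * t) * f t

noncomputable def H (ζ : ℂ) (f : ℝ → ℂ) (x : ℝ) : ℂ :=
  ∫ t in (0:ℝ)..x, Complex.exp (-ζ * t) * f t

noncomputable def C0 (ζ : ℂ) (f : ℝ → ℂ) : ℂ :=
  ∫ t in Set.Ioi (0:ℝ), Complex.exp (-ζ * t) * f t

noncomputable def P (ζ : ℂ) (f : ℝ → ℂ) (x : ℝ) : ℂ :=
  (2*ζ)⁻¹ * (Complex.exp (-ζ*x) * F ζ f x + Complex.exp (ζ*x) * (C0 ζ f - H ζ f x)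
    - C0 ζ f * Complex.exp (-ζ*x))

noncomputable def Pd (ζ : ℂ) (f : ℝ → ℂ) (x : ℝ) : ℂ :=
  (2:ℂ)⁻¹ * (-(Complex.exp (-ζ*x) * F ζ f x) + Complex.exp (ζ*x) * (C0 ζ f - H ζ f x)
    + C0 ζ f * Complex.exp (-ζ*x))

lemma intOn {f : ℝ → ℂ} (hf : Continuous f) (hsupp : HasCompactSupport f)
    (g : ℝ → ℂ) (hg : Continuous g) (s : Set ℝ) :
    IntegrableOn (fun t => g t * f t) s := by
  exact ((hg.mul hf).integrable_of_hasCompactSupport hsupp.mul_left).integrableOn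

lemma split {f : ℝ → ℂ} (hf : Continuous f) (hsupp : HasCompactSupport f)
    (g : ℝ → ℂ) (hg : Continuous g) {x : ℝ} (hx : 0 ≤ x) :
    ∫ t in Set.Ioi (0:ℝ), g t * f t
      = (∫ t in Set.Ioc 0 x, g t * f t) + ∫ t in Set.Ioi x, g t * f t := by
  rw [← MeasureTheory.setIntegral_union (Set.Ioc_disjoint_Ioi le_rfl) measurableSet_Ioi
    (intOn hf hsupp g hg _) (intOn hf hsupp g hg _), Set.Ioc_union_Ioi_eq_Ioi hx]

lemma uCirc_pos {ζ : ℂ} {f : ℝ → ℂ} (hf : Continuous f) (hsupp : HasCompactSupport f)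
    {x : ℝ} (hx : 0 < x) : uCirc ζ f x = P ζ f x := by
  have h1 : Continuous fun t : ℝ => Complex.exp (ζ * t) := by fun_prop
  have h2 : Continuous fun t : ℝ => Complex.exp (-ζ * t) := by fun_prop
  have hker : Continuous fun t : ℝ =>
      Complex.exp (-ζ * |x - t|) - Complex.exp (-ζ * (x + t)) := by fun_prop
  rw [uCirc, if_pos hx]
  rw [split hf hsupp _ hker hx.le]
  have hIoc : ∫ t in Set.Ioc (0:ℝ) x,
      (Complex.exp (-ζ * |x - t|) - Complex.exp (-ζ * (x + t))) * f t
      = Complex.exp (-ζ*x) * F ζ f x - Complex.exp (-ζ*x) * H ζ f x := by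
    rw [MeasureTheory.setIntegral_congr_fun measurableSet_Ioc
      (g := fun t : ℝ => Complex.exp (-ζ*x) * (Complex.exp (ζ*t) * f t)
        - Complex.exp (-ζ*x) * (Complex.exp (-ζ*t) * f t))
      (fun t ht => by
        rw [abs_of_nonneg (by linarith [ht.2] : (0:ℝ) ≤ x - t)]
        push_cast
        rw [show -ζ*((x:ℂ) - t) = -ζ*x + ζ*t by ring,
          show -ζ*((x:ℂ) + t) = -ζ*x + -ζ*t by ring,
          Complex.exp_add, Complex.exp_add]
        ring)]
    rw [MeasureTheory.integral_sub ((intOn hf hsupp _ h1 _).const_mul _)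
      ((intOn hf hsupp _ h2 _).const_mul _), MeasureTheory.integral_const_mul,
      MeasureTheory.integral_const_mul, F, H, integral_of_le hx.le, integral_of_le hx.le]
  have hIoi : ∫ t in Set.Ioi x,
      (Complex.exp (-ζ * |x - t|) - Complex.exp (-ζ * (x + t))) * f t
      = Complex.exp (ζ*x) * (C0 ζ f - H ζ f x)
        - Complex.exp (-ζ*x) * (C0 ζ f - H ζ f x) := by
    have hrest : ∫ t in Set.Ioi x, Complex.exp (-ζ*t) * f t = C0 ζ f - H ζ f x := by
      have := split hf hsupp _ h2 hx.le
      rw [H, integral_of_le hx.le]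
      rw [C0, this]; ring
    rw [MeasureTheory.setIntegral_congr_fun measurableSet_Ioi
      (g := fun t : ℝ => Complex.exp (ζ*x) * (Complex.exp (-ζ*t) * f t)
        - Complex.exp (-ζ*x) * (Complex.exp (-ζ*t) * f t))
      (fun t ht => by
        rw [abs_of_nonpos (by simp only [Set.mem_Ioi] at ht; linarith : x - t ≤ 0)]
        push_cast
        rw [show -ζ*(-((x:ℂ) - t)) = ζ*x + -ζ*t by ring,
          show -ζ*((x:ℂ) + t) = -ζ*x + -ζ*t by ring,
          Complex.exp_add, Complex.exp_add]
        ring)]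
    rw [MeasureTheory.integral_sub ((intOn hf hsupp _ h2 _).const_mul _)
      ((intOn hf hsupp _ h2 _).const_mul _), MeasureTheory.integral_const_mul,
      MeasureTheory.integral_const_mul, hrest]
  rw [hIoc, hIoi, P]
  ring

lemma P_zero (ζ : ℂ) (f : ℝ → ℂ) : P ζ f 0 = 0 := by
  simp [P, F, H]

lemma hasDerivExp (c : ℂ) (x : ℝ) :
    HasDerivAt (fun x : ℝ => Complex.exp (c*x)) (c * Complex.exp (c*x)) x := by
  have h : HasDerivAt (fun z : ℂ => Complex.exp (c*z)) (c * Complex.exp (c*(x:ℂ))) (x:ℂ) := by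
    simpa [mul_comm, Function.comp_def] using
      (Complex.hasDerivAt_exp (c*(x:ℂ))).comp (x:ℂ) ((hasDerivAt_id ((x:ℂ))).const_mul c)
  exact h.comp_ofReal

lemma hasDerivF (ζ : ℂ) {f : ℝ → ℂ} (hf : Continuous f) (x : ℝ) :
    HasDerivAt (F ζ f) (Complex.exp (ζ*x) * f x) x := by
  have hc : Continuous fun t : ℝ => Complex.exp (ζ*t) * f t := by fun_prop
  exact integral_hasDerivAt_right (hc.intervalIntegrable _ _)
    (hc.stronglyMeasurableAtFilter _ _) hc.continuousAt

lemma hasDerivH (ζ : ℂ) {f : ℝ → ℂ} (hf : Continuous f) (x : ℝ) :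
    HasDerivAt (H ζ f) (Complex.exp (-ζ*x) * f x) x := by
  have hc : Continuous fun t : ℝ => Complex.exp (-ζ*t) * f t := by fun_prop
  exact integral_hasDerivAt_right (hc.intervalIntegrable _ _)
    (hc.stronglyMeasurableAtFilter _ _) hc.continuousAt

lemma hasDerivP {ζ : ℂ} {f : ℝ → ℂ} (hζ : ζ ≠ 0) (hf : Continuous f) (x : ℝ) :
    HasDerivAt (P ζ f) (Pd ζ f x) x := by
  have hD := ((((hasDerivExp (-ζ) x).mul (hasDerivF ζ hf x)).add
      ((hasDerivExp ζ x).mul ((hasDerivAt_const x (C0 ζ f)).sub (hasDerivH ζ hf x)))).sub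
      ((hasDerivAt_const x (C0 ζ f)).mul (hasDerivExp (-ζ) x))).const_mul ((2*ζ)⁻¹)
  convert hD using 1
  · rfl
  · rfl
  rw [Pd]
  simp only [Pi.sub_apply]
  field_simp
  ring

lemma hasDerivPd {ζ : ℂ} {f : ℝ → ℂ} (hζ : ζ ≠ 0) (hf : Continuous f) (x : ℝ) :
    HasDerivAt (Pd ζ f) (ζ^2 * P ζ f x - f x) x := by
  have hD := ((((hasDerivExp (-ζ) x).mul (hasDerivF ζ hf x)).neg.add
      ((hasDerivExp ζ x).mul ((hasDerivAt_const x (C0 ζ f)).sub (hasDerivH ζ hf x)))).add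
      ((hasDerivAt_const x (C0 ζ f)).mul (hasDerivExp (-ζ) x))).const_mul ((2:ℂ)⁻¹)
  convert hD using 1
  · rfl
  · rfl
  have hexp : Complex.exp (ζ*(x:ℂ)) * Complex.exp (-ζ*(x:ℂ)) = 1 := by
    rw [← Complex.exp_add, show ζ*(x:ℂ) + -ζ*(x:ℂ) = 0 by ring, Complex.exp_zero]
  have hexp2 : Complex.exp (-(ζ*(x:ℂ))) * Complex.exp (ζ*(x:ℂ)) = 1 := by
    rw [← Complex.exp_add, show -(ζ*(x:ℂ)) + ζ*(x:ℂ) = 0 by ring, Complex.exp_zero]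
  rw [P]
  simp only [Pi.sub_apply]
  field_simp
  linear_combination (2 * f x) * hexp2

lemma contP {ζ : ℂ} {f : ℝ → ℂ} (hζ : ζ ≠ 0) (hf : Continuous f) :
    Continuous (P ζ f) :=
  continuous_iff_continuousAt.2 fun x => (hasDerivP hζ hf x).differentiableAt.continuousAt

lemma uCirc_neg_eq (ζ : ℂ) (f : ℝ → ℂ) {x : ℝ} (hx : x < 0) :
    uCirc ζ f x = uCirc ζ (fun t => f (-t)) (-x) := by
  rw [uCirc, if_neg (by linarith), if_pos hx, uCirc, if_pos (by linarith)]
  congr 1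
  have key := integral_comp_neg_Ioi (0:ℝ)
    (fun s => (Complex.exp (-ζ * |x - s|) - Complex.exp (ζ * (x + s))) * f s)
  rw [neg_zero, MeasureTheory.integral_Iic_eq_integral_Iio] at key
  rw [← key]
  refine (MeasureTheory.setIntegral_congr_fun measurableSet_Ioi fun t _ => ?_).symm
  have habs : |x - (-t)| = |(-x) - t| := by
    rw [show (-x) - t = -(x - (-t)) by ring, abs_neg]
  have hexp : Complex.exp (ζ * ((x:ℂ) + ((-t : ℝ) : ℂ)))
      = Complex.exp (-ζ * (((-x : ℝ) : ℂ) + (t : ℂ))) := by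
    congr 1
    push_cast
    ring
  rw [habs, hexp]

lemma uCirc_tendsto_atTop {ζ : ℂ} (hγ : 0 < ζ.re) {f : ℝ → ℂ}
    (hf : Continuous f) (hsupp : HasCompactSupport f) :
    Tendsto (uCirc ζ f) atTop (nhds 0) := by
  have hζ : ζ ≠ 0 := fun h => by rw [h] at hγ; simp at hγ
  obtain ⟨r, hr⟩ := hsupp.isBounded.subset_closedBall (0:ℝ)
  set R : ℝ := max r 0 + 1 with hR
  have hR0 : 0 < R := by positivity
  have hfz : ∀ t : ℝ, R ≤ |t| → f t = 0 := by
    intro t ht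
    apply image_eq_zero_of_notMem_tsupport
    intro hmem
    have := hr hmem
    rw [Metric.mem_closedBall, Real.dist_eq, sub_zero] at this
    have : r ≤ max r 0 := le_max_left _ _
    linarith [hr hmem, Real.dist_eq t 0 ▸ (Metric.mem_closedBall.1 (hr hmem)),
      abs_nonneg t]
  have h2 : Continuous fun t : ℝ => Complex.exp (-ζ * t) := by fun_prop
  have h1 : Continuous fun t : ℝ => Complex.exp (ζ * t) * f t := by fun_prop
  -- the eventual formula
  have hev : ∀ x : ℝ, R ≤ x → uCirc ζ f x
      = (2*ζ)⁻¹ * (F ζ f R - C0 ζ f) * Complex.exp (-ζ*x) := by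
    intro x hx
    have hx0 : 0 < x := lt_of_lt_of_le hR0 hx
    rw [uCirc_pos hf hsupp hx0]
    have hFx : F ζ f x = F ζ f R := by
      have hzero : ∫ t in R..x, Complex.exp (ζ*t) * f t = 0 := by
        rw [intervalIntegral.integral_congr (g := fun _ : ℝ => 0) (fun t ht => by
          rw [Set.uIcc_of_le hx] at ht
          have : R ≤ |t| := le_trans ht.1 (le_abs_self t)
          simp [hfz t this])]
        simp
      have := intervalIntegral.integral_add_adjacent_intervals
        (h1.intervalIntegrable (μ := volume) 0 R) (h1.intervalIntegrable (μ := volume) R x)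
      rw [F, F, ← this, hzero, add_zero]
    have hCH : C0 ζ f - H ζ f x = 0 := by
      have hsp := split hf hsupp _ h2 hx0.le
      have hz : ∫ t in Set.Ioi x, Complex.exp (-ζ*t) * f t = 0 := by
        rw [MeasureTheory.setIntegral_congr_fun measurableSet_Ioi
          (g := fun _ : ℝ => 0) (fun t ht => by
            have : R ≤ |t| := le_trans (le_trans hx (le_of_lt ht)) (le_abs_self t)
            simp [hfz t this])]
        simp
      rw [C0, hsp, hz, add_zero, H, integral_of_le hx0.le, sub_self]
    rw [P, hFx, hCH]
    ring
  have hexp0 : Tendsto (fun x : ℝ => Complex.exp (-ζ*x)) atTop (nhds 0) := by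
    rw [tendsto_zero_iff_norm_tendsto_zero]
    have hre : ∀ x : ℝ, ‖Complex.exp (-ζ*x)‖ = Real.exp (-(ζ.re * x)) := by
      intro x
      rw [Complex.norm_exp]
      congr 1
      simp [Complex.mul_re]
    simp only [hre]
    exact Real.tendsto_exp_atBot.comp
      (tendsto_neg_atBot_iff.2 (Tendsto.const_mul_atTop hγ tendsto_id))
  have := (hexp0.const_mul ((2*ζ)⁻¹ * (F ζ f R - C0 ζ f))).congr'
    ((eventually_ge_atTop R).mono fun x hx => (hev x hx).symm)
  simpa using this

theorem stmt10_aux {ζ : ℂ} (hγ : 0 < ζ.re) {f : ℝ → ℂ}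
    (hf : Continuous f) (hsupp : HasCompactSupport f) :
    Continuous (uCirc ζ f) ∧
    uCirc ζ f 0 = 0 ∧
    Tendsto (uCirc ζ f) atTop (nhds 0) ∧
    Tendsto (uCirc ζ f) atBot (nhds 0) ∧
    (∃ g : ℝ → ℂ,
      (∀ x : ℝ, x ≠ 0 → HasDerivAt (uCirc ζ f) (g x) x) ∧
      (∀ x : ℝ, x ≠ 0 → HasDerivAt g (ζ ^ 2 * uCirc ζ f x - f x) x)) := by
  have hζ : ζ ≠ 0 := fun h => by rw [h] at hγ; simp at hγ
  set ft : ℝ → ℂ := fun t => f (-t) with hft_def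
  have hft : Continuous ft := hf.comp continuous_neg
  have hsuppt : HasCompactSupport ft := hsupp.comp_homeomorph (Homeomorph.neg ℝ)
  have hzero : uCirc ζ f 0 = 0 := by simp [uCirc]
  -- pointwise description
  have hdesc : ∀ x : ℝ, uCirc ζ f x = if (0:ℝ) ≤ x then P ζ f x else P ζ ft (-x) := by
    intro x
    rcases lt_trichotomy x 0 with hx | hx | hx
    · rw [if_neg (not_le.2 hx), uCirc_neg_eq ζ f hx, uCirc_pos hft hsuppt (by linarith)]
    · subst hx
      rw [if_pos le_rfl, hzero, P_zero]
    · rw [if_pos hx.le, uCirc_pos hf hsupp hx]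
  have hcont : Continuous (uCirc ζ f) := by
    have : Continuous fun x : ℝ => if (0:ℝ) ≤ x then P ζ f x else P ζ ft (-x) := by
      refine Continuous.if_le (contP hζ hf) ((contP hζ hft).comp continuous_neg)
        continuous_const continuous_id fun x hx => ?_
      rw [← hx]
      simp [P_zero]
    exact this.congr fun x => (hdesc x).symm
  refine ⟨hcont, hzero, uCirc_tendsto_atTop hγ hf hsupp, ?_, ?_⟩
  · -- atBot via reflection
    have htop := uCirc_tendsto_atTop hγ hft hsuppt
    have hcomp := htop.comp (tendsto_neg_atBot_atTop : Tendsto (fun x : ℝ => -x) atBot atTop)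
    refine hcomp.congr' ?_
    exact (eventually_lt_atBot (0:ℝ)).mono fun x hx => (uCirc_neg_eq ζ f hx).symm
  · refine ⟨fun x => if 0 < x then Pd ζ f x else -Pd ζ ft (-x), fun x hx => ?_, fun x hx => ?_⟩
    · rcases hx.lt_or_gt with hx | hx
      · -- x < 0
        have hev : ∀ᶠ y in nhds x, y < 0 := eventually_lt_nhds hx
        have hP : HasDerivAt (fun y : ℝ => P ζ ft (-y)) (-Pd ζ ft (-x)) x := by
          simpa [Function.comp_def] using HasDerivAt.scomp x (hasDerivP hζ hft (-x)) (hasDerivAt_neg x)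
        have : HasDerivAt (uCirc ζ f) (-Pd ζ ft (-x)) x := by
          refine hP.congr_of_eventuallyEq (hev.mono fun y hy => ?_)
          rw [uCirc_neg_eq ζ f hy, uCirc_pos hft hsuppt (by linarith)]
        simpa [not_lt.2 hx.le] using this
      · -- 0 < x
        have hev : ∀ᶠ y in nhds x, 0 < y := eventually_gt_nhds hx
        have : HasDerivAt (uCirc ζ f) (Pd ζ f x) x := by
          refine (hasDerivP hζ hf x).congr_of_eventuallyEq (hev.mono fun y hy => ?_)
          exact uCirc_pos hf hsupp hy
        simpa [hx] using this
    · rcases hx.lt_or_gt with hx | hx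
      · have hev : ∀ᶠ y in nhds x, y < 0 := eventually_lt_nhds hx
        have hP : HasDerivAt (fun y : ℝ => -Pd ζ ft (-y))
            (ζ^2 * P ζ ft (-x) - ft (-x)) x := by
          simpa [Function.comp_def, Pi.neg_def] using (HasDerivAt.scomp x (hasDerivPd hζ hft (-x)) (hasDerivAt_neg x)).neg
        have hg : HasDerivAt (fun y : ℝ => if 0 < y then Pd ζ f y else -Pd ζ ft (-y))
            (ζ^2 * P ζ ft (-x) - ft (-x)) x := by
          refine hP.congr_of_eventuallyEq (hev.mono fun y hy => ?_)
          simp [not_lt.2 hy.le]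
        have hux : uCirc ζ f x = P ζ ft (-x) := by
          rw [uCirc_neg_eq ζ f hx, uCirc_pos hft hsuppt (by linarith)]
        rw [hux]
        have hfx : ft (-x) = f x := by simp [hft_def]
        rw [← hfx]
        exact hg
      · have hev : ∀ᶠ y in nhds x, 0 < y := eventually_gt_nhds hx
        have hg : HasDerivAt (fun y : ℝ => if 0 < y then Pd ζ f y else -Pd ζ ft (-y))
            (ζ^2 * P ζ f x - f x) x := by
          refine (hasDerivPd hζ hf x).congr_of_eventuallyEq (hev.mono fun y hy => ?_)
          simp [hy]
        rw [uCirc_pos hf hsupp hx]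
        exact hg

end UCircAux

theorem stmt10 (ζ : ℂ) (hγ : 0 < ζ.re) (f : ℝ → ℂ)
    (hf : Continuous f) (hsupp : HasCompactSupport f) :
    Continuous (uCirc ζ f) ∧
    uCirc ζ f 0 = 0 ∧
    Tendsto (uCirc ζ f) atTop (nhds 0) ∧
    Tendsto (uCirc ζ f) atBot (nhds 0) ∧
    (∃ g : ℝ → ℂ,
      (∀ x : ℝ, x ≠ 0 → HasDerivAt (uCirc ζ f) (g x) x) ∧
      (∀ x : ℝ, x ≠ 0 → HasDerivAt g (ζ ^ 2 * uCirc ζ f x - f x) x)) :=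
  UCircAux.stmt10_aux hγ hf hsupp
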